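/- arXiv:1208.3164 — 3 statements merged into one kernel-verified Lean document; each statement's English description precedes it below -/
import Mathlib

section
/- For a real-valued martingale q_0, ..., q_k with values in [0,1] and q_0 constant equal to α, E(Σ_{t=1}^k |q_t - q_{t-1}|) ≤ sqrt(k · α(1-α)). -/
/-!
Increments of a square-integrable martingale are orthogonal, so
`E ∑ (q_t - q_{t-1})² = E q_k² - E q_0²`. For `q` with values in `[0,1]` we have
`q_k² ≤ q_k` and `E q_k = α`, so this sum of squares is at most `α - α² = α(1 - α)`.
Cauchy–Schwarz, first for each `E |q_t - q_{t-1}|` and then for the sum of `k` square roots,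
turns this into the bound `√(k α (1 - α))`.
-/

open MeasureTheory Real

theorem Finset.sum_Icc_sub_pred (g : ℕ → ℝ) (n : ℕ) :
    ∑ t ∈ Finset.Icc 1 n, (g t - g (t - 1)) = g n - g 0 := by
  induction n with
  | zero => simp
  | succ n ih =>
    rw [Finset.sum_Icc_succ_top (Nat.le_add_left 1 n), ih, Nat.add_sub_cancel]
    ring

theorem Real.sum_sqrt_le_sqrt_card_mul_sum {ι : Type*} (s : Finset ι) {a : ι → ℝ}
    (ha : ∀ i, 0 ≤ a i) : ∑ i ∈ s, √(a i) ≤ √(s.card * ∑ i ∈ s, a i) := by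
  simpa [Real.sqrt_mul (Nat.cast_nonneg _)] using
    Real.sum_sqrt_mul_sqrt_le s (f := fun _ ↦ 1) (fun _ ↦ zero_le_one) ha

section Probability

variable {Ω : Type*} {m : MeasurableSpace Ω} {μ : Measure Ω}

theorem integral_abs_le_sqrt_integral_sq [IsProbabilityMeasure μ] {X : Ω → ℝ}
    (hX : MemLp X 2 μ) : ∫ ω, |X ω| ∂μ ≤ √(∫ ω, X ω ^ 2 ∂μ) := by
  refine Real.le_sqrt_of_sq_le ?_
  have hvar := ProbabilityTheory.variance_nonneg |X| μ
  rw [ProbabilityTheory.variance_eq_sub hX.abs] at hvar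
  simpa only [Pi.pow_apply, Pi.abs_apply, sq_abs, sub_nonneg] using hvar

theorem integral_sq_le_integral_of_mem_Icc {X : Ω → ℝ} (hXi : Integrable X μ)
    (hX : ∀ ω, X ω ∈ Set.Icc (0 : ℝ) 1) : ∫ ω, X ω ^ 2 ∂μ ≤ ∫ ω, X ω ∂μ :=
  integral_mono_of_nonneg (.of_forall fun _ ↦ sq_nonneg _) hXi <| .of_forall fun ω ↦ by
    simpa only [sq] using mul_le_of_le_one_left (hX ω).1 (hX ω).2

theorem memLp_two_of_mem_Icc [IsFiniteMeasure μ] {X : Ω → ℝ} (hXm : AEStronglyMeasurable X μ)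
    (hX : ∀ ω, X ω ∈ Set.Icc (0 : ℝ) 1) : MemLp X 2 μ :=
  MemLp.of_bound hXm 1 <| .of_forall fun ω ↦ by
    rw [Real.norm_eq_abs, abs_le]
    exact ⟨by linarith [(hX ω).1], (hX ω).2⟩

namespace MeasureTheory.Martingale

variable [IsFiniteMeasure μ] {ℱ : Filtration ℕ m} {q : ℕ → Ω → ℝ}

theorem integral_eq (hq : Martingale q ℱ μ) {i j : ℕ} (hij : i ≤ j) :
    ∫ ω, q j ω ∂μ = ∫ ω, q i ω ∂μ := by
  rw [← integral_condExp (ℱ.le i)]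
  exact integral_congr_ae (hq.condExp_ae_eq hij)

theorem integral_mul_eq_integral_sq (hq : Martingale q ℱ μ) (hL2 : ∀ t, MemLp (q t) 2 μ)
    {i j : ℕ} (hij : i ≤ j) : ∫ ω, q i ω * q j ω ∂μ = ∫ ω, q i ω ^ 2 ∂μ := by
  have hcond : μ[q i * q j | ℱ i] =ᵐ[μ] fun ω ↦ q i ω ^ 2 := by
    filter_upwards [condExp_mul_of_stronglyMeasurable_left (hq.stronglyMeasurable i)
      ((hL2 i).integrable_mul (hL2 j)) (hq.integrable j), hq.condExp_ae_eq hij] with ω h1 h2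
    rw [h1, Pi.mul_apply, h2, sq]
  calc ∫ ω, q i ω * q j ω ∂μ = ∫ ω, (μ[q i * q j | ℱ i]) ω ∂μ :=
        (integral_condExp (ℱ.le i)).symm
    _ = ∫ ω, q i ω ^ 2 ∂μ := integral_congr_ae hcond

theorem integral_sq_sub (hq : Martingale q ℱ μ) (hL2 : ∀ t, MemLp (q t) 2 μ)
    {i j : ℕ} (hij : i ≤ j) :
    ∫ ω, (q j ω - q i ω) ^ 2 ∂μ = ∫ ω, q j ω ^ 2 ∂μ - ∫ ω, q i ω ^ 2 ∂μ := by
  have hexpand : (fun ω ↦ (q j ω - q i ω) ^ 2)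
      = fun ω ↦ q j ω ^ 2 - 2 * (q i ω * q j ω) + q i ω ^ 2 := by
    ext ω; ring
  have hmul : Integrable (fun ω ↦ 2 * (q i ω * q j ω)) μ :=
    ((hL2 i).integrable_mul (hL2 j)).const_mul 2
  have hsq (t : ℕ) : Integrable (fun ω ↦ q t ω ^ 2) μ := (hL2 t).integrable_sq
  rw [hexpand, integral_add (f := fun ω ↦ q j ω ^ 2 - 2 * (q i ω * q j ω)) ((hsq j).sub hmul)
    (hsq i), integral_sub (hsq j) hmul, integral_const_mul, hq.integral_mul_eq_integral_sq hL2 hij]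
  ring

theorem sum_integral_abs_sub_pred_le [IsProbabilityMeasure μ] (hq : Martingale q ℱ μ)
    (hL2 : ∀ t, MemLp (q t) 2 μ) (k : ℕ) :
    ∑ t ∈ Finset.Icc 1 k, ∫ ω, |q t ω - q (t - 1) ω| ∂μ
      ≤ √(k * (∫ ω, q k ω ^ 2 ∂μ - ∫ ω, q 0 ω ^ 2 ∂μ)) :=
  calc ∑ t ∈ Finset.Icc 1 k, ∫ ω, |q t ω - q (t - 1) ω| ∂μ
      ≤ ∑ t ∈ Finset.Icc 1 k, √(∫ ω, (q t ω - q (t - 1) ω) ^ 2 ∂μ) :=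
        Finset.sum_le_sum fun t _ ↦
          integral_abs_le_sqrt_integral_sq ((hL2 t).sub (hL2 (t - 1)))
    _ ≤ √((Finset.Icc 1 k).card * ∑ t ∈ Finset.Icc 1 k, ∫ ω, (q t ω - q (t - 1) ω) ^ 2 ∂μ) :=
        Real.sum_sqrt_le_sqrt_card_mul_sum _ fun _ ↦ integral_nonneg fun _ ↦ sq_nonneg _
    _ = √(k * (∫ ω, q k ω ^ 2 ∂μ - ∫ ω, q 0 ω ^ 2 ∂μ)) := by
        rw [Nat.card_Icc, Nat.add_sub_cancel,
          Finset.sum_congr rfl fun t _ ↦ hq.integral_sq_sub hL2 (Nat.sub_le t 1),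
          Finset.sum_Icc_sub_pred (fun t ↦ ∫ ω, q t ω ^ 2 ∂μ)]

end MeasureTheory.Martingale

end Probability

/-- For a real-valued martingale `q_0, ..., q_k` with values in `[0,1]` and `q_0`
constant equal to `α`, `E (Σ_{t=1}^k |q_t - q_{t-1}|) ≤ sqrt (k α (1 - α))`. -/
theorem stmt11 {Ω : Type} {m : MeasurableSpace Ω} (μ : Measure Ω) [IsProbabilityMeasure μ]
    (ℱ : Filtration ℕ m) (k : ℕ) (α : ℝ) (q : ℕ → Ω → ℝ)
    (hbdd : ∀ t ω, q t ω ∈ Set.Icc (0 : ℝ) 1)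
    (h0 : ∀ ω, q 0 ω = α)
    (hmart : Martingale q ℱ μ) :
    ∑ t ∈ Finset.Icc 1 k, ∫ ω, |q t ω - q (t - 1) ω| ∂μ
      ≤ Real.sqrt (k * (α * (1 - α))) := by
  have hL2 (t : ℕ) : MemLp (q t) 2 μ :=
    memLp_two_of_mem_Icc ((hmart.stronglyMeasurable t).mono (ℱ.le t)).aestronglyMeasurable
      (hbdd t)
  have hsq0 : ∫ ω, q 0 ω ^ 2 ∂μ = α ^ 2 := by simp [h0]
  have hsqk : ∫ ω, q k ω ^ 2 ∂μ ≤ α :=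
    (integral_sq_le_integral_of_mem_Icc (hmart.integrable k) (hbdd k)).trans_eq
      ((hmart.integral_eq (Nat.zero_le k)).trans (by simp [h0]))
  calc ∑ t ∈ Finset.Icc 1 k, ∫ ω, |q t ω - q (t - 1) ω| ∂μ
      ≤ √(k * (∫ ω, q k ω ^ 2 ∂μ - ∫ ω, q 0 ω ^ 2 ∂μ)) :=
        hmart.sum_integral_abs_sub_pred_le hL2 k
    _ ≤ √(k * (α * (1 - α))) := by
        rw [hsq0]
        gcongr
        linarith
end

section
/- For a nonnegative martingale Z_0, ..., Z_k with Z_0 constant, Σ_{t=1}^k E|Z_t - Z_{t-1}| ≤ sqrt(2 k E Z_0) · sqrt(E(Z_k log Z_k) - E(Z_0 log Z_0)). -/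
/-!
For `a ≥ 0` with `b = E[a | 𝓕]`, the Bregman divergence `g = a log a - a log b - a + b` of
`x ↦ x log x` is nonnegative, has mean `E (a log a) - E (b log b)` (pull the `𝓕`-measurable
`log b` out of the conditional expectation; the integrability of `a log b` comes from the same
pull-out property for the `ℝ≥0∞`-valued conditional expectation), and satisfies the Pinsker-type
bound `3 (a - b)² ≤ (2a + 4b) g`. Cauchy–Schwarz against the weight `(2a + 4b) / 3`, whose mean
is `2 E a`, gives `E|a - b| ≤ √(2 E a) √(E (a log a) - E (b log b))`. Apply this to each
martingale increment, then use Cauchy–Schwarz over the `k` increments and telescope.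
-/

open MeasureTheory Real InformationTheory Set
open scoped ENNReal

lemma three_mul_sub_one_sq_le_klFun {x : ℝ} (hx : 0 ≤ x) :
    3 * (x - 1) ^ 2 ≤ (2 * x + 4) * klFun x := by
  set h : ℝ → ℝ := fun x ↦ (2 * x + 4) * klFun x - 3 * (x - 1) ^ 2
  have h' : ∀ x ≠ 0, HasDerivAt h (4 * ((x + 1) * log x - 2 * (x - 1))) x := fun x hx ↦
    ((((hasDerivAt_id x).const_mul 2).add_const 4).mul (hasDerivAt_klFun hx)).sub
      ((((hasDerivAt_id x).sub_const 1).pow 2).const_mul 3) |>.congr_deriv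
      (by simp only [klFun_apply, id]; ring)
  have h'' : ∀ x ≠ 0, HasDerivAt (fun x ↦ 4 * ((x + 1) * log x - 2 * (x - 1)))
      (4 * (log x + x⁻¹ - 1)) x := fun x hx ↦
    (((((hasDerivAt_id x).add_const 1).mul (hasDerivAt_log hx)).sub
      (((hasDerivAt_id x).sub_const 1).const_mul 2)).const_mul 4).congr_deriv
      (by simp only [id]; field_simp; ring)
  have hconv : ConvexOn ℝ (Ici 0) h := by
    refine convexOn_of_hasDerivWithinAt2_nonneg (convex_Ici 0)
      (f' := fun x ↦ 4 * ((x + 1) * log x - 2 * (x - 1))) (f'' := fun x ↦ 4 * (log x + x⁻¹ - 1))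
      (by fun_prop) (fun x hx ↦ ?_) (fun x hx ↦ ?_) (fun x hx ↦ ?_)
    all_goals rw [interior_Ici] at hx
    · exact (h' x hx.out.ne').hasDerivWithinAt
    · exact (h'' x hx.out.ne').hasDerivWithinAt
    · linarith [one_sub_inv_le_log_of_pos hx.out]
  have hmin : IsMinOn h (Ici 0) 1 := hconv.isMinOn_of_rightDeriv_eq_zero (by simp)
    (by simpa using ((h' 1 one_ne_zero).hasDerivWithinAt).derivWithin (uniqueDiffWithinAt_Ioi 1))
  simpa [h, klFun_one] using hmin hx

/-- The Bregman divergence `φ a - φ b - φ' b * (a - b)` of `φ x = x * log x`. -/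
noncomputable def bregmanMulLog (a b : ℝ) : ℝ := a * log a - a * log b - a + b

lemma mul_klFun_div (a : ℝ) {b : ℝ} (hb : b ≠ 0) : b * klFun (a / b) = bregmanMulLog a b := by
  rcases eq_or_ne a 0 with rfl | ha
  · simp [bregmanMulLog, klFun_zero]
  · rw [klFun_apply, log_div ha hb, bregmanMulLog]
    field_simp
    ring

lemma bregmanMulLog_nonneg {a b : ℝ} (ha : 0 ≤ a) (hb : 0 < b) : 0 ≤ bregmanMulLog a b := by
  rw [← mul_klFun_div a hb.ne']
  exact mul_nonneg hb.le (klFun_nonneg (div_nonneg ha hb.le))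

lemma three_mul_sub_sq_le_bregmanMulLog {a b : ℝ} (ha : 0 ≤ a) (hb : 0 < b) :
    3 * (a - b) ^ 2 ≤ (2 * a + 4 * b) * bregmanMulLog a b := by
  rw [← mul_klFun_div a hb.ne']
  calc 3 * (a - b) ^ 2 = b ^ 2 * (3 * (a / b - 1) ^ 2) := by field_simp
    _ ≤ b ^ 2 * ((2 * (a / b) + 4) * klFun (a / b)) :=
      mul_le_mul_of_nonneg_left (three_mul_sub_one_sq_le_klFun (div_nonneg ha hb.le)) (sq_nonneg b)
    _ = (2 * a + 4 * b) * (b * klFun (a / b)) := by field_simp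

lemma Finset.sum_Icc_sub_pred_s13 {M : Type*} [AddCommGroup M] (f : ℕ → M) (k : ℕ) :
    ∑ t ∈ Finset.Icc 1 k, (f t - f (t - 1)) = f k - f 0 := by
  induction k with
  | zero => simp
  | succ k ih => rw [Finset.sum_Icc_succ_top (by omega), ih]; simp

section

variable {Ω : Type*} {m m₀ : MeasurableSpace Ω} {μ : Measure Ω}

lemma integral_abs_le_sqrt_mul_sqrt {f u v : Ω → ℝ} (hu : Integrable u μ) (hv : Integrable v μ)
    (hu0 : 0 ≤ᵐ[μ] u) (hv0 : 0 ≤ᵐ[μ] v) (h : ∀ᵐ ω ∂μ, f ω ^ 2 ≤ u ω * v ω) :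
    ∫ ω, |f ω| ∂μ ≤ √(∫ ω, u ω ∂μ) * √(∫ ω, v ω ∂μ) := by
  have hsqrt : ∀ {w : Ω → ℝ}, Integrable w μ → 0 ≤ᵐ[μ] w →
      MemLp (fun ω ↦ √(w ω)) 2 μ ∧ ∫ ω, √(w ω) ^ 2 ∂μ = ∫ ω, w ω ∂μ := fun {w} hw hw0 ↦ by
    have hsq : (fun ω ↦ √(w ω) ^ 2) =ᵐ[μ] w := by
      filter_upwards [hw0] with ω hω using sq_sqrt hω
    exact ⟨(memLp_two_iff_integrable_sq (continuous_sqrt.comp_aestronglyMeasurable hw.1)).2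
      (hw.congr hsq.symm), integral_congr_ae hsq⟩
  obtain ⟨hu2, hu_int⟩ := hsqrt hu hu0
  obtain ⟨hv2, hv_int⟩ := hsqrt hv hv0
  calc ∫ ω, |f ω| ∂μ ≤ ∫ ω, √(u ω) * √(v ω) ∂μ := by
        refine integral_mono_of_nonneg (ae_of_all _ fun _ ↦ abs_nonneg _)
          (hu2.integrable_mul hv2) ?_
        filter_upwards [h, hv0] with ω hω hvω
        rw [← sqrt_mul' _ hvω, ← sqrt_sq_eq_abs]
        exact sqrt_le_sqrt hω
    _ ≤ (∫ ω, √(u ω) ^ (2 : ℝ) ∂μ) ^ (1 / 2 : ℝ) * (∫ ω, √(v ω) ^ (2 : ℝ) ∂μ) ^ (1 / 2 : ℝ) :=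
        integral_mul_le_Lp_mul_Lq_of_nonneg .two_two (ae_of_all _ fun _ ↦ sqrt_nonneg _)
          (ae_of_all _ fun _ ↦ sqrt_nonneg _) (by simpa using hu2) (by simpa using hv2)
    _ = √(∫ ω, u ω ∂μ) * √(∫ ω, v ω ∂μ) := by
        simp only [rpow_two, hu_int, hv_int, ← sqrt_eq_rpow]

lemma lintegral_mul_condLExp (hm : m ≤ m₀) [SigmaFinite (μ.trim hm)] {g X : Ω → ℝ≥0∞}
    (hg : Measurable[m] g) (hX : AEMeasurable X μ) :
    ∫⁻ ω, g ω * X ω ∂μ = ∫⁻ ω, g ω * μ⁻[X|m] ω ∂μ := by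
  have hY : AEMeasurable μ⁻[X|m] μ := (measurable_condLExp' ..).aemeasurable
  refine Measurable.ennreal_induction
    (motive := fun g ↦ ∫⁻ ω, g ω * X ω ∂μ = ∫⁻ ω, g ω * μ⁻[X|m] ω ∂μ)
    (fun c s hs ↦ ?_) (fun f g _ hf _ ihf ihg ↦ ?_) (fun f hf hmono ih ↦ ?_) hg
  · have hind : ∀ Y : Ω → ℝ≥0∞,
        (fun ω ↦ s.indicator (fun _ ↦ c) ω * Y ω) = s.indicator (fun ω ↦ c * Y ω) :=
      fun Y ↦ funext fun ω ↦ by by_cases hω : ω ∈ s <;> simp [hω]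
    simp only [hind]
    rw [lintegral_indicator (hm s hs), lintegral_indicator (hm s hs),
      lintegral_const_mul'' _ hX.restrict, lintegral_const_mul'' _ hY.restrict,
      setLIntegral_condLExp hm _ _ hs]
  · simp only [Pi.add_apply, add_mul]
    rw [lintegral_add_left' (f := fun ω ↦ f ω * X ω) ((hf.mono hm le_rfl).aemeasurable.mul hX),
      lintegral_add_left' (f := fun ω ↦ f ω * μ⁻[X|m] ω) ((hf.mono hm le_rfl).aemeasurable.mul hY),
      ihf, ihg]
  · have hmono' : ∀ Y : Ω → ℝ≥0∞, ∀ᵐ ω ∂μ, Monotone fun n ↦ f n ω * Y ω :=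
      fun Y ↦ ae_of_all _ fun ω i j hij ↦ mul_le_mul_left (hmono hij ω) _
    simp only [ENNReal.iSup_mul]
    rw [lintegral_iSup' (f := fun n ω ↦ f n ω * X ω)
        (fun n ↦ ((hf n).mono hm le_rfl).aemeasurable.mul hX) (hmono' X),
      lintegral_iSup' (f := fun n ω ↦ f n ω * μ⁻[X|m] ω)
        (fun n ↦ ((hf n).mono hm le_rfl).aemeasurable.mul hY) (hmono' _)]
    simp only [ih]

lemma lintegral_mul_ofReal_eq_of_condExp_eq (hm : m ≤ m₀) [SigmaFinite (μ.trim hm)]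
    {g : Ω → ℝ≥0∞} {a b : Ω → ℝ} (hg : Measurable[m] g) (ha0 : 0 ≤ᵐ[μ] a)
    (ha : Integrable a μ) (hab : μ[a|m] =ᵐ[μ] b) :
    ∫⁻ ω, g ω * ENNReal.ofReal (a ω) ∂μ = ∫⁻ ω, g ω * ENNReal.ofReal (b ω) ∂μ := by
  rw [lintegral_mul_condLExp hm hg ha.1.aemeasurable.ennreal_ofReal]
  refine lintegral_congr_ae ?_
  filter_upwards [condLExp_ofReal m ha ha0, hab] with ω hω hω'
  rw [hω, hω']

lemma ae_eq_zero_of_condExp_eq_zero (hm : m ≤ m₀) [SigmaFinite (μ.trim hm)] {a : Ω → ℝ}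
    (ha0 : 0 ≤ᵐ[μ] a) (ha : Integrable a μ) : ∀ᵐ ω ∂μ, μ[a|m] ω = 0 → a ω = 0 := by
  set s := {ω | μ[a|m] ω = 0}
  have hs : MeasurableSet[m] s := stronglyMeasurable_condExp.measurable (measurableSet_singleton 0)
  have hzero : ∫⁻ ω, s.indicator 1 ω * ENNReal.ofReal (a ω) ∂μ = 0 := by
    rw [lintegral_mul_ofReal_eq_of_condExp_eq (g := s.indicator 1) hm
      (measurable_const.indicator hs) ha0 ha Filter.EventuallyEq.rfl]
    refine (lintegral_congr fun ω ↦ ?_).trans lintegral_zero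
    by_cases hω : ω ∈ s <;> simp_all [s]
  have hmeas : AEMeasurable (fun ω ↦ s.indicator 1 ω * ENNReal.ofReal (a ω)) μ :=
    (measurable_const.indicator (hm s hs)).aemeasurable.mul ha.1.aemeasurable.ennreal_ofReal
  filter_upwards [(lintegral_eq_zero_iff' hmeas).1 hzero, ha0] with ω hω ha0ω hωs
  simp only [Set.indicator_of_mem (show ω ∈ s from hωs), Pi.one_apply, one_mul, Pi.zero_apply,
    ENNReal.ofReal_eq_zero] at hω
  exact le_antisymm hω ha0ω

lemma nonneg_of_condExp_eq {a b : Ω → ℝ} (ha0 : 0 ≤ᵐ[μ] a) (hab : μ[a|m] =ᵐ[μ] b) :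
    0 ≤ᵐ[μ] b := by
  filter_upwards [condExp_nonneg (m := m) ha0, hab] with ω h h' using h' ▸ h

lemma integrable_mul_of_condExp_eq (hm : m ≤ m₀) [SigmaFinite (μ.trim hm)] {a b f : Ω → ℝ}
    (hf : StronglyMeasurable[m] f) (ha0 : 0 ≤ᵐ[μ] a) (ha : Integrable a μ)
    (hab : μ[a|m] =ᵐ[μ] b) (hbf : Integrable (fun ω ↦ b ω * f ω) μ) :
    Integrable (fun ω ↦ a ω * f ω) μ := by
  have henorm : ∀ {c : Ω → ℝ}, 0 ≤ᵐ[μ] c →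
      ∫⁻ ω, ‖c ω * f ω‖ₑ ∂μ = ∫⁻ ω, ‖f ω‖ₑ * ENNReal.ofReal (c ω) ∂μ := fun hc0 ↦
    lintegral_congr_ae <| by
      filter_upwards [hc0] with ω hω
      rw [enorm_mul, Real.enorm_eq_ofReal hω, mul_comm]
  refine ⟨ha.1.mul (hf.mono hm).aestronglyMeasurable, ?_⟩
  rw [HasFiniteIntegral, henorm ha0,
    lintegral_mul_ofReal_eq_of_condExp_eq (g := fun ω ↦ ‖f ω‖ₑ) hm
      (measurable_enorm.comp hf.measurable) ha0 ha hab, ← henorm (nonneg_of_condExp_eq ha0 hab)]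
  exact hbf.2

lemma integral_mul_of_condExp_eq (hm : m ≤ m₀) [SigmaFinite (μ.trim hm)] {a b f : Ω → ℝ}
    (hf : StronglyMeasurable[m] f) (ha0 : 0 ≤ᵐ[μ] a) (ha : Integrable a μ)
    (hab : μ[a|m] =ᵐ[μ] b) (hbf : Integrable (fun ω ↦ b ω * f ω) μ) :
    ∫ ω, a ω * f ω ∂μ = ∫ ω, b ω * f ω ∂μ := by
  have hpull := condExp_mul_of_stronglyMeasurable_right hf
    (integrable_mul_of_condExp_eq hm hf ha0 ha hab hbf) ha
  calc ∫ ω, a ω * f ω ∂μ = ∫ ω, μ[a * f|m] ω ∂μ := (integral_condExp hm).symm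
    _ = ∫ ω, b ω * f ω ∂μ := integral_congr_ae <| by
      filter_upwards [hpull, hab] with ω hω hω'
      rw [hω, Pi.mul_apply, hω']

lemma integrable_bregmanMulLog (hm : m ≤ m₀) [SigmaFinite (μ.trim hm)] {a b : Ω → ℝ}
    (hb : StronglyMeasurable[m] b) (ha0 : 0 ≤ᵐ[μ] a) (ha : Integrable a μ) (hab : μ[a|m] =ᵐ[μ] b)
    (ha_log : Integrable (fun ω ↦ a ω * log (a ω)) μ)
    (hb_log : Integrable (fun ω ↦ b ω * log (b ω)) μ) :
    Integrable (fun ω ↦ bregmanMulLog (a ω) (b ω)) μ :=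
  ((ha_log.sub (integrable_mul_of_condExp_eq hm hb.measurable.log.stronglyMeasurable ha0 ha hab
    hb_log)).sub ha).add (integrable_condExp.congr hab)

lemma integral_bregmanMulLog (hm : m ≤ m₀) [SigmaFinite (μ.trim hm)] {a b : Ω → ℝ}
    (hb : StronglyMeasurable[m] b) (ha0 : 0 ≤ᵐ[μ] a) (ha : Integrable a μ) (hab : μ[a|m] =ᵐ[μ] b)
    (ha_log : Integrable (fun ω ↦ a ω * log (a ω)) μ)
    (hb_log : Integrable (fun ω ↦ b ω * log (b ω)) μ) :
    ∫ ω, bregmanMulLog (a ω) (b ω) ∂μ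
      = (∫ ω, a ω * log (a ω) ∂μ) - ∫ ω, b ω * log (b ω) ∂μ := by
  have hlog := hb.measurable.log.stronglyMeasurable
  have hA := integrable_mul_of_condExp_eq hm hlog ha0 ha hab hb_log
  have hmean : ∫ ω, b ω ∂μ = ∫ ω, a ω ∂μ := by
    rw [← integral_congr_ae hab, integral_condExp hm]
  simp only [bregmanMulLog]
  rw [integral_add (f := fun ω ↦ a ω * log (a ω) - a ω * log (b ω) - a ω)
      ((ha_log.sub hA).sub ha) (integrable_condExp.congr hab),
    integral_sub (f := fun ω ↦ a ω * log (a ω) - a ω * log (b ω)) (ha_log.sub hA) ha,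
    integral_sub ha_log hA,
    integral_mul_of_condExp_eq hm hlog ha0 ha hab hb_log, hmean]
  ring

lemma ae_bregmanMulLog_bounds (hm : m ≤ m₀) [SigmaFinite (μ.trim hm)] {a b : Ω → ℝ}
    (ha0 : 0 ≤ᵐ[μ] a) (ha : Integrable a μ) (hab : μ[a|m] =ᵐ[μ] b) :
    ∀ᵐ ω ∂μ, 0 ≤ bregmanMulLog (a ω) (b ω) ∧
      3 * (a ω - b ω) ^ 2 ≤ (2 * a ω + 4 * b ω) * bregmanMulLog (a ω) (b ω) := by
  filter_upwards [ha0, nonneg_of_condExp_eq ha0 hab, hab, ae_eq_zero_of_condExp_eq_zero hm ha0 ha]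
    with ω haω hbω habω hzero
  rcases hbω.eq_or_lt with hb | hb
  · simp [bregmanMulLog, ← hb, hzero (habω.trans hb.symm)]
  · exact ⟨bregmanMulLog_nonneg haω hb, three_mul_sub_sq_le_bregmanMulLog haω hb⟩

lemma integral_mul_log_le_of_condExp_eq (hm : m ≤ m₀) [SigmaFinite (μ.trim hm)] {a b : Ω → ℝ}
    (hb : StronglyMeasurable[m] b) (ha0 : 0 ≤ᵐ[μ] a) (ha : Integrable a μ) (hab : μ[a|m] =ᵐ[μ] b)
    (ha_log : Integrable (fun ω ↦ a ω * log (a ω)) μ)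
    (hb_log : Integrable (fun ω ↦ b ω * log (b ω)) μ) :
    ∫ ω, b ω * log (b ω) ∂μ ≤ ∫ ω, a ω * log (a ω) ∂μ := by
  rw [← sub_nonneg, ← integral_bregmanMulLog hm hb ha0 ha hab ha_log hb_log]
  exact integral_nonneg_of_ae ((ae_bregmanMulLog_bounds hm ha0 ha hab).mono fun _ h ↦ h.1)

theorem integral_abs_sub_le_of_condExp_eq (hm : m ≤ m₀) [SigmaFinite (μ.trim hm)] {a b : Ω → ℝ}
    (hb : StronglyMeasurable[m] b) (ha0 : 0 ≤ᵐ[μ] a) (ha : Integrable a μ) (hab : μ[a|m] =ᵐ[μ] b)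
    (ha_log : Integrable (fun ω ↦ a ω * log (a ω)) μ)
    (hb_log : Integrable (fun ω ↦ b ω * log (b ω)) μ) :
    ∫ ω, |a ω - b ω| ∂μ ≤ √(2 * ∫ ω, a ω ∂μ) *
      √((∫ ω, a ω * log (a ω) ∂μ) - ∫ ω, b ω * log (b ω) ∂μ) := by
  have hb_int : Integrable b μ := integrable_condExp.congr hab
  have hmean : ∫ ω, b ω ∂μ = ∫ ω, a ω ∂μ := by
    rw [← integral_congr_ae hab, integral_condExp hm]
  have hweight : ∫ ω, (2 * a ω + 4 * b ω) / 3 ∂μ = 2 * ∫ ω, a ω ∂μ := by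
    rw [integral_div, integral_add (ha.const_mul 2) (hb_int.const_mul 4), integral_const_mul,
      integral_const_mul, hmean]
    ring
  have hbounds := ae_bregmanMulLog_bounds hm ha0 ha hab
  rw [← hweight, ← integral_bregmanMulLog hm hb ha0 ha hab ha_log hb_log]
  refine integral_abs_le_sqrt_mul_sqrt (((ha.const_mul 2).add (hb_int.const_mul 4)).div_const 3)
    (integrable_bregmanMulLog hm hb ha0 ha hab ha_log hb_log) ?_ (hbounds.mono fun _ h ↦ h.1) ?_
  · filter_upwards [ha0, nonneg_of_condExp_eq ha0 hab] with ω haω hbω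
    show 0 ≤ (2 * a ω + 4 * b ω) / 3
    linarith [show 0 ≤ a ω from haω, show 0 ≤ b ω from hbω]
  · filter_upwards [hbounds] with ω hω
    linarith [hω.2]

end

theorem stmt13_general {Ω : Type} {m : MeasurableSpace Ω} (μ : Measure Ω) [IsProbabilityMeasure μ]
    (ℱ : Filtration ℕ m) (k : ℕ) (Z : ℕ → Ω → ℝ)
    (hnn : ∀ t ω, 0 ≤ Z t ω)
    (hmart : Martingale Z ℱ μ)
    (hint : ∀ t, Integrable (fun ω => Z t ω * Real.log (Z t ω)) μ) :
    ∑ t ∈ Finset.Icc 1 k, ∫ ω, |Z t ω - Z (t - 1) ω| ∂μ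
      ≤ Real.sqrt (2 * k * ∫ ω, Z 0 ω ∂μ) *
        Real.sqrt ((∫ ω, Z k ω * Real.log (Z k ω) ∂μ)
          - ∫ ω, Z 0 ω * Real.log (Z 0 ω) ∂μ) := by
  set H : ℕ → ℝ := fun t ↦ ∫ ω, Z t ω * log (Z t ω) ∂μ
  have hmean (t : ℕ) : ∫ ω, Z t ω ∂μ = ∫ ω, Z 0 ω ∂μ := by
    simpa using (hmart.setIntegral_eq (Nat.zero_le t) MeasurableSet.univ).symm
  have hmono : Monotone H := monotone_nat_of_le_succ fun t ↦
    integral_mul_log_le_of_condExp_eq (ℱ.le t) (hmart.stronglyMeasurable t)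
      (ae_of_all _ (hnn (t + 1))) (hmart.integrable _) (hmart.condExp_ae_eq t.le_succ)
      (hint _) (hint t)
  have hstep (t : ℕ) : ∫ ω, |Z t ω - Z (t - 1) ω| ∂μ
      ≤ √(2 * ∫ ω, Z 0 ω ∂μ) * √(H t - H (t - 1)) := by
    simpa only [hmean] using integral_abs_sub_le_of_condExp_eq (ℱ.le (t - 1))
      (hmart.stronglyMeasurable _) (ae_of_all _ (hnn t)) (hmart.integrable t)
      (hmart.condExp_ae_eq (Nat.sub_le t 1)) (hint t) (hint _)
  calc ∑ t ∈ Finset.Icc 1 k, ∫ ω, |Z t ω - Z (t - 1) ω| ∂μ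
      ≤ ∑ t ∈ Finset.Icc 1 k, √(2 * ∫ ω, Z 0 ω ∂μ) * √(H t - H (t - 1)) :=
        Finset.sum_le_sum fun t _ ↦ hstep t
    _ ≤ √(∑ t ∈ Finset.Icc 1 k, 2 * ∫ ω, Z 0 ω ∂μ) * √(∑ t ∈ Finset.Icc 1 k, (H t - H (t - 1))) :=
        sum_sqrt_mul_sqrt_le _ (fun _ ↦ mul_nonneg zero_le_two (integral_nonneg (hnn 0)))
          fun t ↦ sub_nonneg.2 (hmono (Nat.sub_le t 1))
    _ = √(2 * k * ∫ ω, Z 0 ω ∂μ) * √(H k - H 0) := by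
        rw [Finset.sum_const, Nat.card_Icc, Finset.sum_Icc_sub_pred_s13, nsmul_eq_mul,
          Nat.add_sub_cancel, mul_left_comm, ← mul_assoc]

/-- For a nonnegative martingale `Z_0, ..., Z_k` with `Z_0` constant,
`Σ_{t=1}^k E|Z_t - Z_{t-1}| ≤ sqrt (2 k E Z_0) * sqrt (E (Z_k log Z_k) - E (Z_0 log Z_0))`
(natural logarithm, convention `0 log 0 = 0`, which holds since `Real.log 0 = 0`). -/
theorem stmt13 {Ω : Type} {m : MeasurableSpace Ω} (μ : Measure Ω) [IsProbabilityMeasure μ]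
    (ℱ : Filtration ℕ m) (k : ℕ) (c : ℝ) (Z : ℕ → Ω → ℝ)
    (hnn : ∀ t ω, 0 ≤ Z t ω)
    (h0 : ∀ ω, Z 0 ω = c)
    (hmart : Martingale Z ℱ μ)
    (hint : ∀ t, Integrable (fun ω => Z t ω * Real.log (Z t ω)) μ) :
    ∑ t ∈ Finset.Icc 1 k, ∫ ω, |Z t ω - Z (t - 1) ω| ∂μ
      ≤ Real.sqrt (2 * k * ∫ ω, Z 0 ω ∂μ) *
        Real.sqrt ((∫ ω, Z k ω * Real.log (Z k ω) ∂μ)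
          - ∫ ω, Z 0 ω * Real.log (Z 0 ω) ∂μ) :=
  stmt13_general μ ℱ k Z hnn hmart hint
end

section
/- Define V(k,d) = sup over finite sets X with |X| = d and p ∈ Δ(X) of V(k,p), where V(k,p) is the maximal expected total l1 variation of a k-step Δ(X)-valued martingale starting at p. Then V(k_1, d_1) + V(k_2, d_2) ≤ V(k_1 + k_2, d_1 d_2). -/
open MeasureTheory Real

/-- `V k X p` is the supremum of the expected total `ℓ₁` variation
`E (Σ_{t=1}^k ‖p_t - p_{t-1}‖₁)` over all `k`-step martingales of probability vectors
on the finite set `X` starting at the constant `p`. -/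
noncomputable def V (k : ℕ) (X : Type) [Fintype X] (p : X → ℝ) : ℝ :=
  sSup { v | ∃ (Ω : Type) (m : MeasurableSpace Ω) (μ : Measure Ω)
    (_ : IsProbabilityMeasure μ) (ℱ : Filtration ℕ m) (f : ℕ → Ω → X → ℝ),
    (∀ t ω x, 0 ≤ f t ω x) ∧ (∀ t ω, ∑ x, f t ω x = 1) ∧ (∀ ω, f 0 ω = p) ∧
    (∀ x, Martingale (fun t ω => f t ω x) ℱ μ) ∧
    v = ∑ t ∈ Finset.Icc 1 k, ∫ ω, ∑ x, |f t ω x - f (t - 1) ω x| ∂μ }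

/-- `Vd k d` is the supremum of `V k X p` over all finite sets `X` with `d` elements
and all probability vectors `p` on `X`. -/
noncomputable def Vd (k d : ℕ) : ℝ :=
  sSup { v | ∃ (X : Type) (_ : Fintype X), Fintype.card X = d ∧
    ∃ p : X → ℝ, (∀ x, 0 ≤ p x) ∧ (∑ x, p x = 1) ∧ v = V k X p }

/-
Run a `k₁`-step martingale `(p_t)` on `Δ(X₁)` and, independently, a `k₂`-step martingale `(q_t)`
on `Δ(X₂)`, the second one starting only after the first one has stopped. The product
`p_t ⊗ q_t` is a martingale on `Δ(X₁ × X₂)`, because conditional expectations factor over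
independent coordinates. In each step only one factor moves, and since the other factor is a
probability vector, `‖a ⊗ b - a' ⊗ b‖₁ = ‖a - a'‖₁`. So the variations of the two martingales
add up.
-/

namespace MeasureTheory

theorem setIntegral_eq_of_isPiSystem {Ω E : Type*} [NormedAddCommGroup E] [NormedSpace ℝ E]
    {m mΩ : MeasurableSpace Ω} {μ : Measure Ω} (hm : m ≤ mΩ) {S : Set (Set Ω)}
    (hgen : m = MeasurableSpace.generateFrom S) (hS : IsPiSystem S) {F G : Ω → E}
    (hF : Integrable F μ) (hG : Integrable G μ) (huniv : ∫ ω, F ω ∂μ = ∫ ω, G ω ∂μ)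
    (hrect : ∀ s ∈ S, ∫ ω in s, F ω ∂μ = ∫ ω in s, G ω ∂μ) {s : Set Ω}
    (hs : MeasurableSet[m] s) : ∫ ω in s, F ω ∂μ = ∫ ω in s, G ω ∂μ := by
  induction s, hs using MeasurableSpace.induction_on_inter hgen hS with
  | empty => simp
  | basic t ht => exact hrect t ht
  | compl t ht h =>
    have e₁ := integral_add_compl (hm _ ht) hF
    have e₂ := integral_add_compl (hm _ ht) hG
    rw [← sub_eq_of_eq_add' e₁.symm, ← sub_eq_of_eq_add' e₂.symm, h, huniv]
  | iUnion t hdisj ht h =>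
    rw [integral_iUnion (fun n => hm _ (ht n)) hdisj hF.integrableOn,
      integral_iUnion (fun n => hm _ (ht n)) hdisj hG.integrableOn]
    exact tsum_congr h

variable {Ω₁ Ω₂ : Type*} {m₁ mΩ₁ : MeasurableSpace Ω₁} {m₂ mΩ₂ : MeasurableSpace Ω₂}
  {μ₁ : Measure Ω₁} {μ₂ : Measure Ω₂} [IsFiniteMeasure μ₁] [IsFiniteMeasure μ₂]

theorem condExp_mul_prod_ae_eq (hm₁ : m₁ ≤ mΩ₁) (hm₂ : m₂ ≤ mΩ₂) {u : Ω₁ → ℝ} {v : Ω₂ → ℝ}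
    (hu : Integrable u μ₁) (hv : Integrable v μ₂) :
    (μ₁.prod μ₂)[fun ω => u ω.1 * v ω.2 | m₁.prod m₂]
      =ᵐ[μ₁.prod μ₂] fun ω => μ₁[u|m₁] ω.1 * μ₂[v|m₂] ω.2 := by
  have hm : m₁.prod m₂ ≤ mΩ₁.prod mΩ₂ :=
    sup_le_sup (MeasurableSpace.comap_mono hm₁) (MeasurableSpace.comap_mono hm₂)
  have hcond : Integrable (fun ω : Ω₁ × Ω₂ => μ₁[u|m₁] ω.1 * μ₂[v|m₂] ω.2) (μ₁.prod μ₂) :=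
    integrable_condExp.mul_prod integrable_condExp
  refine (ae_eq_condExp_of_forall_setIntegral_eq hm (hu.mul_prod hv)
    (fun _ _ _ => hcond.integrableOn) (fun s hs _ => ?_) ?_).symm
  · refine setIntegral_eq_of_isPiSystem hm (@generateFrom_prod _ _ m₁ m₂).symm
      (@isPiSystem_prod _ _ m₁ m₂) hcond (hu.mul_prod hv) ?_ ?_ hs
    · rw [integral_prod_mul, integral_prod_mul, integral_condExp hm₁, integral_condExp hm₂]
    · rintro _ ⟨s₁, hs₁, s₂, hs₂, rfl⟩
      rw [setIntegral_prod_mul, setIntegral_prod_mul,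
        setIntegral_condExp hm₁ hu hs₁, setIntegral_condExp hm₂ hv hs₂]
  · refine StronglyMeasurable.aestronglyMeasurable ?_
    exact (stronglyMeasurable_condExp.comp_measurable (@measurable_fst _ _ m₁ m₂)).mul
      (stronglyMeasurable_condExp.comp_measurable (@measurable_snd _ _ m₁ m₂))

section ProbabilityMeasureProd

variable {α β E : Type*} [NormedAddCommGroup E] [NormedSpace ℝ E] {mα : MeasurableSpace α}
  {mβ : MeasurableSpace β} {μ : Measure α} {ν : Measure β}

theorem integral_fun_fst_of_isProbabilityMeasure [SFinite μ] [IsProbabilityMeasure ν]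
    (f : α → E) : ∫ z, f z.1 ∂μ.prod ν = ∫ x, f x ∂μ := by
  rw [integral_fun_fst, probReal_univ, one_smul]

theorem integral_fun_snd_of_isProbabilityMeasure [IsProbabilityMeasure μ] [SFinite ν]
    (f : β → E) : ∫ z, f z.2 ∂μ.prod ν = ∫ y, f y ∂ν := by
  rw [integral_fun_snd, probReal_univ, one_smul]

end ProbabilityMeasureProd

namespace Filtration

variable {ι κ : Type*} [Preorder ι] [Preorder κ]

def reindex {Ω : Type*} {mΩ : MeasurableSpace Ω} (ℱ : Filtration κ mΩ) {α : ι → κ}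
    (hα : Monotone α) : Filtration ι mΩ where
  seq i := ℱ (α i)
  mono' _ _ hij := ℱ.mono (hα hij)
  le' i := ℱ.le (α i)

protected def prod (ℱ₁ : Filtration ι mΩ₁) (ℱ₂ : Filtration ι mΩ₂) :
    Filtration ι (mΩ₁.prod mΩ₂) where
  seq i := (ℱ₁ i).prod (ℱ₂ i)
  mono' _ _ hij := sup_le_sup (MeasurableSpace.comap_mono (ℱ₁.mono hij))
    (MeasurableSpace.comap_mono (ℱ₂.mono hij))
  le' i := sup_le_sup (MeasurableSpace.comap_mono (ℱ₁.le i))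
    (MeasurableSpace.comap_mono (ℱ₂.le i))

end Filtration

theorem Martingale.reindex {ι κ Ω E : Type*} [Preorder ι] [Preorder κ] [NormedAddCommGroup E]
    [NormedSpace ℝ E] {mΩ : MeasurableSpace Ω} {μ : Measure Ω} {ℱ : Filtration κ mΩ}
    {f : κ → Ω → E} (hf : Martingale f ℱ μ) {α : ι → κ} (hα : Monotone α) :
    Martingale (fun i => f (α i)) (ℱ.reindex hα) μ :=
  ⟨fun i => hf.stronglyAdapted (α i), fun _ _ hij => hf.condExp_ae_eq (hα hij)⟩

theorem Martingale.mul_prod {ι : Type*} [Preorder ι] {ℱ₁ : Filtration ι mΩ₁}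
    {ℱ₂ : Filtration ι mΩ₂} {f : ι → Ω₁ → ℝ} {g : ι → Ω₂ → ℝ} (hf : Martingale f ℱ₁ μ₁)
    (hg : Martingale g ℱ₂ μ₂) :
    Martingale (fun i ω => f i ω.1 * g i ω.2) (ℱ₁.prod ℱ₂) (μ₁.prod μ₂) := by
  refine ⟨fun i => ?_, fun i j hij => ?_⟩
  · exact ((hf.stronglyAdapted i).comp_measurable (@measurable_fst _ _ (ℱ₁ i) (ℱ₂ i))).mul
      ((hg.stronglyAdapted i).comp_measurable (@measurable_snd _ _ (ℱ₁ i) (ℱ₂ i)))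
  · refine (condExp_mul_prod_ae_eq (ℱ₁.le i) (ℱ₂.le i) (hf.integrable j)
      (hg.integrable j)).trans ?_
    exact (Measure.quasiMeasurePreserving_fst.ae_eq (hf.condExp_ae_eq hij)).mul
      (Measure.quasiMeasurePreserving_snd.ae_eq (hg.condExp_ae_eq hij))

end MeasureTheory

section ProbabilityVector

variable {X Y : Type*} [Fintype X] [Fintype Y]

theorem mul_mem_stdSimplex_prod {p : X → ℝ} {q : Y → ℝ} (hp : p ∈ stdSimplex ℝ X)
    (hq : q ∈ stdSimplex ℝ Y) : (fun xy : X × Y => p xy.1 * q xy.2) ∈ stdSimplex ℝ (X × Y) :=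
  ⟨fun xy => mul_nonneg (hp.1 _) (hq.1 _), by
    simp only [Fintype.sum_prod_type, ← Finset.mul_sum, hq.2, mul_one, hp.2]⟩

theorem sum_abs_sub_le_two {p q : X → ℝ} (hp : p ∈ stdSimplex ℝ X) (hq : q ∈ stdSimplex ℝ X) :
    ∑ x, |p x - q x| ≤ 2 :=
  calc ∑ x, |p x - q x| ≤ ∑ x, (|p x| + |q x|) := Finset.sum_le_sum fun x _ => abs_sub _ _
    _ = 2 := by
      simp only [abs_of_nonneg (hp.1 _), abs_of_nonneg (hq.1 _), Finset.sum_add_distrib, hp.2,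
        hq.2]
      norm_num

theorem sum_abs_mul_sub_mul_right {a a' : X → ℝ} {b : Y → ℝ} (hb : b ∈ stdSimplex ℝ Y) :
    ∑ xy : X × Y, |a xy.1 * b xy.2 - a' xy.1 * b xy.2| = ∑ x, |a x - a' x| := by
  simp only [Fintype.sum_prod_type, ← sub_mul, abs_mul, abs_of_nonneg (hb.1 _), ← Finset.mul_sum,
    hb.2, mul_one]

theorem sum_abs_mul_sub_mul_left {a : X → ℝ} {b b' : Y → ℝ} (ha : a ∈ stdSimplex ℝ X) :
    ∑ xy : X × Y, |a xy.1 * b xy.2 - a xy.1 * b' xy.2| = ∑ y, |b y - b' y| := by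
  simp only [Fintype.sum_prod_type, ← mul_sub, abs_mul, abs_of_nonneg (ha.1 _), ← Finset.mul_sum,
    ← Finset.sum_mul, ha.2, one_mul]

end ProbabilityVector

theorem csSup_add_csSup_le {α : Type*} [ConditionallyCompleteLattice α] [AddGroup α]
    [AddLeftMono α] [AddRightMono α] {s t : Set α} {a : α} (hs : s.Nonempty) (ht : t.Nonempty)
    (h : ∀ x ∈ s, ∀ y ∈ t, x + y ≤ a) : sSup s + sSup t ≤ a := by
  have := hs.to_subtype
  have := ht.to_subtype
  rw [sSup_eq_iSup', sSup_eq_iSup']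
  exact ciSup_add_ciSup_le fun x y => h x x.2 y y.2

theorem Finset.sum_Icc_one_add {M : Type*} [AddCommMonoid M] (f : ℕ → M) (m n : ℕ) :
    ∑ t ∈ Icc 1 (m + n), f t = ∑ t ∈ Icc 1 m, f t + ∑ t ∈ Icc 1 n, f (m + t) := by
  induction n with
  | zero => simp
  | succ n ih =>
    rw [← add_assoc, sum_Icc_succ_top (by omega), ih, sum_Icc_succ_top (by omega), add_assoc,
      add_assoc]

-- The sets whose suprema are `V k X p` and `Vd k d`.
def variationSet (k : ℕ) (X : Type) [Fintype X] (p : X → ℝ) : Set ℝ :=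
  { v | ∃ (Ω : Type) (m : MeasurableSpace Ω) (μ : Measure Ω)
    (_ : IsProbabilityMeasure μ) (ℱ : Filtration ℕ m) (f : ℕ → Ω → X → ℝ),
    (∀ t ω x, 0 ≤ f t ω x) ∧ (∀ t ω, ∑ x, f t ω x = 1) ∧ (∀ ω, f 0 ω = p) ∧
    (∀ x, Martingale (fun t ω => f t ω x) ℱ μ) ∧
    v = ∑ t ∈ Finset.Icc 1 k, ∫ ω, ∑ x, |f t ω x - f (t - 1) ω x| ∂μ }

def maxVariationSet (k d : ℕ) : Set ℝ :=
  { v | ∃ (X : Type) (_ : Fintype X), Fintype.card X = d ∧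
    ∃ p : X → ℝ, (∀ x, 0 ≤ p x) ∧ (∑ x, p x = 1) ∧ v = V k X p }

section variationSet

variable {k : ℕ} {X : Type} [Fintype X] {p : X → ℝ}

theorem zero_mem_variationSet (hp : p ∈ stdSimplex ℝ X) : 0 ∈ variationSet k X p :=
  ⟨Unit, inferInstance, Measure.dirac (), inferInstance, Filtration.const ℕ _ le_rfl,
    fun _ _ => p, fun _ _ => hp.1, fun _ _ => hp.2, fun _ => rfl,
    fun _ => martingale_const _ _ _, by simp⟩

theorem le_two_mul_of_mem_variationSet {v : ℝ} (hv : v ∈ variationSet k X p) : v ≤ 2 * k := by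
  obtain ⟨Ω, _, μ, _, ℱ, f, hf0, hf1, -, hfm, rfl⟩ := hv
  have hstep (t : ℕ) : ∫ ω, ∑ x, |f t ω x - f (t - 1) ω x| ∂μ ≤ 2 := by
    refine (integral_mono_of_nonneg (ae_of_all _ fun ω => by positivity) (integrable_const 2)
      (ae_of_all _ fun ω => sum_abs_sub_le_two ⟨hf0 t ω, hf1 t ω⟩
        ⟨hf0 (t - 1) ω, hf1 (t - 1) ω⟩)).trans ?_
    simp
  calc _ ≤ ∑ _t ∈ Finset.Icc 1 k, (2 : ℝ) := Finset.sum_le_sum fun t _ => hstep t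
    _ = 2 * k := by simp [mul_comm]

theorem bddAbove_variationSet : BddAbove (variationSet k X p) :=
  ⟨2 * k, fun _ hv => le_two_mul_of_mem_variationSet hv⟩

theorem V_le_two_mul (hp : p ∈ stdSimplex ℝ X) : V k X p ≤ 2 * k :=
  csSup_le ⟨0, zero_mem_variationSet hp⟩ fun _ hv => le_two_mul_of_mem_variationSet hv

end variationSet

theorem add_mem_variationSet_prod {k₁ k₂ : ℕ} {X₁ X₂ : Type} [Fintype X₁] [Fintype X₂]
    {p : X₁ → ℝ} {q : X₂ → ℝ} {a b : ℝ} (ha : a ∈ variationSet k₁ X₁ p)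
    (hb : b ∈ variationSet k₂ X₂ q) :
    a + b ∈ variationSet (k₁ + k₂) (X₁ × X₂) (fun xy => p xy.1 * q xy.2) := by
  obtain ⟨Ω₁, _, μ₁, _, ℱ₁, f, hf0, hf1, hfp, hfm, rfl⟩ := ha
  obtain ⟨Ω₂, _, μ₂, _, ℱ₂, g, hg0, hg1, hgq, hgm, rfl⟩ := hb
  have hf (t ω) : f t ω ∈ stdSimplex ℝ X₁ := ⟨hf0 t ω, hf1 t ω⟩
  have hg (t ω) : g t ω ∈ stdSimplex ℝ X₂ := ⟨hg0 t ω, hg1 t ω⟩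
  have hmin : Monotone fun t => min t k₁ := monotone_id.min monotone_const
  have hsub : Monotone fun t => t - k₁ := fun _ _ h => Nat.sub_le_sub_right h k₁
  refine ⟨Ω₁ × Ω₂, inferInstance, μ₁.prod μ₂, inferInstance,
    (ℱ₁.reindex hmin).prod (ℱ₂.reindex hsub),
    fun t ω xy => f (min t k₁) ω.1 xy.1 * g (t - k₁) ω.2 xy.2,
    fun t ω => (mul_mem_stdSimplex_prod (hf _ _) (hg _ _)).1,
    fun t ω => (mul_mem_stdSimplex_prod (hf _ _) (hg _ _)).2, fun ω => by simp [hfp, hgq],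
    fun xy => ((hfm xy.1).reindex hmin).mul_prod ((hgm xy.2).reindex hsub), ?_⟩
  rw [Finset.sum_Icc_one_add]
  congr 1 <;> symm <;> beta_reduce
  · refine Finset.sum_congr rfl fun t ht => ?_
    obtain ⟨ht1, htk⟩ := Finset.mem_Icc.1 ht
    rw [min_eq_left htk, min_eq_left (show t - 1 ≤ k₁ by omega), Nat.sub_eq_zero_of_le htk,
      Nat.sub_eq_zero_of_le (show t - 1 ≤ k₁ by omega)]
    simp only [sum_abs_mul_sub_mul_right (hg _ _)]
    exact integral_fun_fst_of_isProbabilityMeasure fun ω => ∑ x, |f t ω x - f (t - 1) ω x|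
  · refine Finset.sum_congr rfl fun t ht => ?_
    obtain ⟨ht1, htk⟩ := Finset.mem_Icc.1 ht
    rw [min_eq_right (by omega), min_eq_right (by omega), Nat.add_sub_cancel_left,
      show k₁ + t - 1 - k₁ = t - 1 by omega]
    simp only [sum_abs_mul_sub_mul_left (hf _ _)]
    exact integral_fun_snd_of_isProbabilityMeasure fun ω => ∑ y, |g t ω y - g (t - 1) ω y|

theorem V_add_V_le_V_prod (k₁ k₂ : ℕ) {X₁ X₂ : Type} [Fintype X₁] [Fintype X₂] {p : X₁ → ℝ}
    {q : X₂ → ℝ} (hp : p ∈ stdSimplex ℝ X₁) (hq : q ∈ stdSimplex ℝ X₂) :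
    V k₁ X₁ p + V k₂ X₂ q ≤ V (k₁ + k₂) (X₁ × X₂) (fun xy => p xy.1 * q xy.2) :=
  csSup_add_csSup_le ⟨0, zero_mem_variationSet hp⟩ ⟨0, zero_mem_variationSet hq⟩
    fun _ ha _ hb => le_csSup bddAbove_variationSet (add_mem_variationSet_prod ha hb)

theorem V_le_Vd (k : ℕ) {X : Type} [Fintype X] {p : X → ℝ} (hp : p ∈ stdSimplex ℝ X) :
    V k X p ≤ Vd k (Fintype.card X) := by
  refine le_csSup ⟨2 * k, ?_⟩ ⟨X, inferInstance, rfl, p, hp.1, hp.2, rfl⟩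
  rintro _ ⟨Y, _, -, q, hq0, hq1, rfl⟩
  exact V_le_two_mul ⟨hq0, hq1⟩

theorem maxVariationSet_nonempty (k : ℕ) {d : ℕ} (hd : 0 < d) :
    (maxVariationSet k d).Nonempty :=
  ⟨_, Fin d, inferInstance, Fintype.card_fin d, Pi.single ⟨0, hd⟩ 1,
    (single_mem_stdSimplex ℝ _).1, (single_mem_stdSimplex ℝ _).2, rfl⟩

theorem stmt15_general (k₁ k₂ d₁ d₂ : ℕ)
    (hd₁ : 0 < d₁) (hd₂ : 0 < d₂) :
    Vd k₁ d₁ + Vd k₂ d₂ ≤ Vd (k₁ + k₂) (d₁ * d₂) := by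
  refine csSup_add_csSup_le (maxVariationSet_nonempty k₁ hd₁)
    (maxVariationSet_nonempty k₂ hd₂) ?_
  rintro _ ⟨X₁, _, rfl, p, hp0, hp1, rfl⟩ _ ⟨X₂, _, rfl, q, hq0, hq1, rfl⟩
  calc V k₁ X₁ p + V k₂ X₂ q ≤ V (k₁ + k₂) (X₁ × X₂) (fun xy => p xy.1 * q xy.2) :=
        V_add_V_le_V_prod k₁ k₂ ⟨hp0, hp1⟩ ⟨hq0, hq1⟩
    _ ≤ Vd (k₁ + k₂) (Fintype.card (X₁ × X₂)) :=
        V_le_Vd _ (mul_mem_stdSimplex_prod ⟨hp0, hp1⟩ ⟨hq0, hq1⟩)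
    _ = Vd (k₁ + k₂) (Fintype.card X₁ * Fintype.card X₂) := by rw [Fintype.card_prod]

/-- Superadditivity of the maximal variation: `V(k₁,d₁) + V(k₂,d₂) ≤ V(k₁+k₂, d₁ d₂)`. -/
theorem stmt15 (k₁ k₂ d₁ d₂ : ℕ) (hk₁ : 0 < k₁) (hk₂ : 0 < k₂)
    (hd₁ : 0 < d₁) (hd₂ : 0 < d₂) :
    Vd k₁ d₁ + Vd k₂ d₂ ≤ Vd (k₁ + k₂) (d₁ * d₂) :=
  stmt15_general k₁ k₂ d₁ d₂ hd₁ hd₂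
end
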